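/- Let d ≥ 4 be even and 1 ≤ p, r ≤ ∞. Suppose that for a fixed constant C₀ > 0 the estimate ‖A_C f‖_{L^r(C,σ)} ≤ C₀ ‖f‖_{L^p(F_q^d, dx)} holds for all functions f : F_q^d → ℂ and all sufficiently large powers q of odd primes, and suppose that the cone C contains a (d/2)-dimensional F_q-linear subspace H of F_q^d. Then the point (1/p, 1/r) ∈ ℝ² must lie in the convex hull of the five points (0,0), (0,1), ((d−1)/d, 1), P₁ = ((d−1)/d, 1/(d−2)), and P₂ = ((d²−3d+2)/(d²−2d+2), (d−2)/(d²−2d+2)). -/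

import Mathlib

open Finset MeasureTheory
open scoped ENNReal

namespace ConeFF

variable (F : Type) [Field F] [Fintype F] [DecidableEq F]

/-- The cone `C = {x ∈ F^d : x₁² + ⋯ + x_{d-2}² = x_{d-1} x_d}` (0-indexed). -/
def cone (d : ℕ) (hd : 3 ≤ d) : Finset (Fin d → F) :=
  Finset.univ.filter fun x =>
    (∑ i ∈ Finset.univ.filter (fun i : Fin d => (i : ℕ) < d - 2), x i ^ 2) =
      x ⟨d - 2, by omega⟩ * x ⟨d - 1, by omega⟩

/-- The quadratic form `Γ(ξ) = ξ₁² + ⋯ + ξ_{d-2}² − 4 ξ_{d-1} ξ_d`. -/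
def gammaForm (d : ℕ) (hd : 3 ≤ d) (ξ : Fin d → F) : F :=
  (∑ i ∈ Finset.univ.filter (fun i : Fin d => (i : ℕ) < d - 2), ξ i ^ 2) -
    4 * ξ ⟨d - 2, by omega⟩ * ξ ⟨d - 1, by omega⟩

/-- Indicator function of a finite set, with values in `ℂ`. -/
def ind {V : Type} [DecidableEq V] (E : Finset V) : V → ℂ :=
  fun x => if x ∈ E then 1 else 0

/-- Convolution with respect to the normalized counting measure `dx`. -/
noncomputable def conv (d : ℕ) (f g : (Fin d → F) → ℂ) : (Fin d → F) → ℂ :=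
  fun y => ((Fintype.card F : ℂ) ^ d)⁻¹ * ∑ x, f (y - x) * g x

/-- The averaging operator `f ∗ σ` over the cone. -/
noncomputable def avg (d : ℕ) (hd : 3 ≤ d) (f : (Fin d → F) → ℂ) : (Fin d → F) → ℂ :=
  fun y => ((cone F d hd).card : ℂ)⁻¹ * ∑ x ∈ cone F d hd, f (y - x)

/-- Inverse Fourier transform `f^∨(m) = q^{-d} ∑_x χ(m·x) f(x)`. -/
noncomputable def invFT (d : ℕ) (χ : AddChar F ℂ) (f : (Fin d → F) → ℂ)
    (m : Fin d → F) : ℂ :=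
  ((Fintype.card F : ℂ) ^ d)⁻¹ * ∑ x, χ (dotProduct m x) * f x

/-- Fourier transform `ĝ(x) = ∑_m χ(−m·x) g(m)` on the dual space. -/
noncomputable def ft (d : ℕ) (χ : AddChar F ℂ) (g : (Fin d → F) → ℂ)
    (x : Fin d → F) : ℂ :=
  ∑ m, χ (-(dotProduct m x)) * g m

/-- `σ^∨(m) = |C|⁻¹ ∑_{x∈C} χ(m·x)`. -/
noncomputable def sigmaInv (d : ℕ) (hd : 3 ≤ d) (χ : AddChar F ℂ) (m : Fin d → F) : ℂ :=
  ((cone F d hd).card : ℂ)⁻¹ * ∑ x ∈ cone F d hd, χ (dotProduct m x)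

/-- `K(m) = σ^∨(m) − δ₀(m)`. -/
noncomputable def Kfun (d : ℕ) (hd : 3 ≤ d) (χ : AddChar F ℂ) (m : Fin d → F) : ℂ :=
  sigmaInv F d hd χ m - if m = 0 then 1 else 0

/-- `M(m) = C^∨(m) − (|C|/q^d) δ₀(m)`. -/
noncomputable def Mfun (d : ℕ) (hd : 3 ≤ d) (χ : AddChar F ℂ) (m : Fin d → F) : ℂ :=
  invFT F d χ (ind (cone F d hd)) m -
    if m = 0 then ((cone F d hd).card : ℂ) / (Fintype.card F : ℂ) ^ d else 0

/-- `L^p(C,σ)` norm (for finite `p`), with `σ` the normalized surface measure. -/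
noncomputable def coneLpNorm (d : ℕ) (hd : 3 ≤ d) (p : ℝ) (h : (Fin d → F) → ℂ) : ℝ :=
  (((cone F d hd).card : ℝ)⁻¹ * ∑ x ∈ cone F d hd, ‖h x‖ ^ p) ^ (1 / p)

/-- `L^p(F_q^d, dx)` norm (for finite `p`), with `dx` the normalized counting measure. -/
noncomputable def spaceLpNorm (d : ℕ) (p : ℝ) (f : (Fin d → F) → ℂ) : ℝ :=
  (((Fintype.card F : ℝ) ^ d)⁻¹ * ∑ x, ‖f x‖ ^ p) ^ (1 / p)

end ConeFF

instance (V : Type) (d : ℕ) : MeasurableSpace (Fin d → V) := ⊤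

namespace ConeFF

variable (F : Type) [Field F] [Fintype F] [DecidableEq F]

/-- The normalized counting measure `dx` on `F_q^d`. -/
noncomputable def dxMeasure (d : ℕ) : Measure (Fin d → F) :=
  ((Fintype.card F : ℝ≥0∞) ^ d)⁻¹ • Measure.count

/-- The normalized surface measure `σ` on the cone. -/
noncomputable def coneMeasure (d : ℕ) (hd : 3 ≤ d) : Measure (Fin d → F) :=
  ((cone F d hd).card : ℝ≥0∞)⁻¹ •
    Measure.count.restrict (↑(cone F d hd) : Set (Fin d → F))

end ConeFF

/-!
Test the estimate against `δ₀`, the indicator of `C` and the indicator of a `d/2`-dimensional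
subspace `H ⊆ C`. Since `|C| ≤ 2 q^(d-1)` (a point of `C` is determined up to the sign of its first
coordinate by the others) and `|H| = q^(d/2)`, after taking logarithms each test reads
`α log q ≤ M` with `α` and `M` independent of `q`; letting `q` run through the primes forces
`α ≤ 0`. The three conditions obtained, `d/p ≤ d - 1`, `1/p ≤ (d - 1)/r` and
`d/p ≤ (d - 2)(1 + 1/r)`, together with `0 ≤ 1/p` and `1/r ≤ 1`, describe the pentagon.
-/

open Filter

section Counting

variable {R : Type*} [CommRing R] [NoZeroDivisors R] [Fintype R] [DecidableEq R]
  {ι : Type*} [Fintype ι] [DecidableEq ι]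

lemma card_le_two_mul_pow_of_sq_eq (s : Finset (ι → R)) (i : ι)
    (hs : ∀ x ∈ s, ∀ y ∈ s, (∀ j ≠ i, x j = y j) → x i ^ 2 = y i ^ 2) :
    #s ≤ 2 * Fintype.card R ^ (Fintype.card ι - 1) := by
  let forget : (ι → R) → ({j // j ≠ i} → R) := fun x j => x j
  calc #s ≤ 2 * #(s.image forget) := by
        refine card_le_mul_card_image _ _ fun a ha => ?_
        obtain ⟨y, hy, rfl⟩ := mem_image.mp ha
        refine (card_le_card (t := {y, Function.update y i (-y i)}) fun z hz => ?_).trans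
          card_le_two
        obtain ⟨hz, hzy⟩ := mem_filter.mp hz
        have hoff : ∀ j ≠ i, z j = y j := fun j hj => congrFun hzy ⟨j, hj⟩
        rcases sq_eq_sq_iff_eq_or_eq_neg.mp (hs z hz y hy hoff) with h | h
        · simpa using Or.inl (Function.eq_update_iff.mpr ⟨h, hoff⟩ |>.trans
            (Function.update_eq_self i y))
        · simpa using Or.inr (Function.eq_update_iff.mpr ⟨h, hoff⟩)
    _ ≤ 2 * Fintype.card ({j // j ≠ i} → R) := by gcongr; exact card_le_univ _
    _ = 2 * Fintype.card R ^ (Fintype.card ι - 1) := by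
        simp [Fintype.card_subtype_compl]

end Counting

section Lp

variable {α E : Type*} [MeasurableSpace α] [NormedAddCommGroup E] {μ : Measure α} {s : Set α}
  {r : ℝ≥0∞}

lemma ofReal_mul_measure_rpow_le_eLpNorm (hs : MeasurableSet s) (hμs : μ s ≠ 0) (hr : r ≠ 0)
    {g : α → E} {c : ℝ} (hc : ∀ x ∈ s, c ≤ ‖g x‖) :
    ENNReal.ofReal c * μ s ^ (1 / r.toReal) ≤ eLpNorm g r μ := by
  rcases le_or_gt c 0 with hc0 | hc0
  · simp [ENNReal.ofReal_of_nonpos hc0]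
  rw [← Real.enorm_eq_ofReal hc0.le, ← eLpNorm_indicator_const' hs hμs hr]
  refine eLpNorm_mono fun x => ?_
  by_cases hx : x ∈ s
  · simpa [hx, abs_of_pos hc0] using hc x hx
  · simp [hx]

end Lp

lemma mem_convexHull_of_eq_smul_add_smul {S : Set (ℝ × ℝ)} {v w z : ℝ × ℝ} (h0 : 0 ∈ S)
    (hv : v ∈ S) (hw : w ∈ S) {b c : ℝ} (hb : 0 ≤ b) (hc : 0 ≤ c) (hbc : b + c ≤ 1)
    (hz : z = b • v + c • w) : z ∈ convexHull ℝ S := by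
  have := (convex_convexHull ℝ S).sum_mem (t := univ) (w := ![1 - b - c, b, c]) (z := ![0, v, w])
    (by intro i _; fin_cases i <;> simp <;> linarith)
    (by simp [Fin.sum_univ_three]; ring)
    (by intro i _; fin_cases i <;> simp <;> exact subset_convexHull ℝ S ‹_›)
  simpa [Fin.sum_univ_three, hz] using this

lemma nonpos_of_frequently_mul_log_le {α M : ℝ}
    (h : ∃ᶠ q : ℕ in atTop, α * Real.log q ≤ M) : α ≤ 0 := by
  by_contra! hα
  obtain ⟨q, hqM, hMq⟩ := (h.and_eventually (((Real.tendsto_log_atTop.comp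
    tendsto_natCast_atTop_atTop).const_mul_atTop hα).eventually_gt_atTop M)).exists
  exact absurd hqM (not_le.mpr hMq)

namespace ConeFF

lemma eLpNorm_ind {β : Type} [DecidableEq β] [MeasurableSpace β] {ν : Measure β}
    {t : Finset β} (ht : MeasurableSet (t : Set β)) (hνt : ν t ≠ 0) {p : ℝ≥0∞}
    (hp : p ≠ 0) :
    eLpNorm (ind t) p ν = ν t ^ (1 / p.toReal) := by
  have : ind t = (t : Set β).indicator fun _ => (1 : ℂ) := by
    ext x; by_cases hx : x ∈ t <;> simp [ind, hx]
  rw [this, eLpNorm_indicator_const' ht hνt hp]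
  simp

variable {F : Type} [Field F] [Fintype F]

lemma dxMeasure_finset (d : ℕ) (E : Finset (Fin d → F)) :
    dxMeasure F d E = ENNReal.ofReal (#E / Fintype.card F ^ d) := by
  rw [dxMeasure, Measure.smul_apply, smul_eq_mul,
    Measure.count_apply_finset' MeasurableSpace.measurableSet_top,
    ENNReal.ofReal_div_of_pos (by positivity), ENNReal.div_eq_inv_mul]
  norm_cast

variable [DecidableEq F]

lemma zero_mem_cone (d : ℕ) (hd : 3 ≤ d) : (0 : Fin d → F) ∈ cone F d hd := by
  simp [cone]

lemma neg_mem_cone {d : ℕ} {hd : 3 ≤ d} {x : Fin d → F} (hx : x ∈ cone F d hd) :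
    -x ∈ cone F d hd := by
  simpa [cone] using hx

lemma card_cone_pos (d : ℕ) (hd : 3 ≤ d) : 0 < #(cone F d hd) :=
  card_pos.mpr ⟨0, zero_mem_cone d hd⟩

lemma card_cone_le (d : ℕ) (hd : 3 ≤ d) :
    #(cone F d hd) ≤ 2 * Fintype.card F ^ (d - 1) := by
  let i₀ : Fin d := ⟨0, by omega⟩
  have hi₀ : i₀ ∈ univ.filter fun i : Fin d => (i : ℕ) < d - 2 := by
    simp only [mem_filter, mem_univ, true_and, i₀]; omega
  have sq_eq (x : Fin d → F) (hx : x ∈ cone F d hd) : x i₀ ^ 2 =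
      x ⟨d - 2, by omega⟩ * x ⟨d - 1, by omega⟩ -
        ∑ i ∈ (univ.filter fun i : Fin d => (i : ℕ) < d - 2).erase i₀, x i ^ 2 := by
    simp only [cone, mem_filter, mem_univ, true_and, ← add_sum_erase _ _ hi₀] at hx
    rw [← hx]; ring
  simpa using card_le_two_mul_pow_of_sq_eq (cone F d hd) i₀ fun x hx y hy hxy => by
    rw [sq_eq x hx, sq_eq y hy, hxy, hxy,
      sum_congr rfl fun i hi => by rw [hxy i (ne_of_mem_erase hi)]]
    all_goals simp only [ne_eq, Fin.ext_iff, i₀]; omega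

lemma coneMeasure_finset {d : ℕ} {hd : 3 ≤ d} {B : Finset (Fin d → F)}
    (hB : B ⊆ cone F d hd) :
    coneMeasure F d hd B = ENNReal.ofReal (#B / #(cone F d hd)) := by
  rw [coneMeasure, Measure.smul_apply, smul_eq_mul,
    Measure.restrict_apply MeasurableSpace.measurableSet_top,
    Set.inter_eq_left.mpr (by exact_mod_cast hB),
    Measure.count_apply_finset' MeasurableSpace.measurableSet_top,
    ENNReal.ofReal_div_of_pos (by exact_mod_cast (card_cone_pos d hd)),
    ENNReal.div_eq_inv_mul]
  norm_cast

lemma norm_avg_ind {d : ℕ} {hd : 3 ≤ d} (E : Finset (Fin d → F)) (y : Fin d → F) :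
    ‖avg F d hd (ind E) y‖ = #{x ∈ cone F d hd | y - x ∈ E} / #(cone F d hd) := by
  simp only [avg, ind, sum_boole, norm_mul, norm_inv, Complex.norm_natCast, div_eq_inv_mul]

lemma log_le_of_le_norm_avg_ind {d : ℕ} {hd : 3 ≤ d} {p r : ℝ≥0∞} (hp : p ≠ 0)
    (hr : r ≠ 0) {C₀ c : ℝ} (hC₀ : 0 < C₀) (hc : 0 < c) {E B : Finset (Fin d → F)}
    (hE : E.Nonempty) (hB : B.Nonempty) (hBC : B ⊆ cone F d hd)
    (hav : ∀ y ∈ B, c ≤ ‖avg F d hd (ind E) y‖)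
    (hop : eLpNorm (avg F d hd (ind E)) r (coneMeasure F d hd) ≤
      ENNReal.ofReal C₀ * eLpNorm (ind E) p (dxMeasure F d)) :
    Real.log c + r⁻¹.toReal * (Real.log #B - Real.log #(cone F d hd)) ≤
      Real.log C₀ + p⁻¹.toReal * (Real.log #E - d * Real.log (Fintype.card F)) := by
  have hq : (0 : ℝ) < Fintype.card F := by exact_mod_cast Fintype.card_pos
  have hK : (0 : ℝ) < #(cone F d hd) := by exact_mod_cast card_cone_pos d hd
  have hB0 : (0 : ℝ) < #B := by exact_mod_cast hB.card_pos
  have hE0 : (0 : ℝ) < #E := by exact_mod_cast hE.card_pos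
  have hσB := coneMeasure_finset hBC
  have hdxE := dxMeasure_finset d E
  have hmeas := ofReal_mul_measure_rpow_le_eLpNorm MeasurableSpace.measurableSet_top
    (by rw [hσB]; positivity) hr hav
  rw [eLpNorm_ind MeasurableSpace.measurableSet_top (by rw [hdxE]; positivity) hp] at hop
  rw [hσB] at hmeas
  rw [hdxE] at hop
  have key := hmeas.trans hop
  rw [ENNReal.ofReal_rpow_of_pos (by positivity), ENNReal.ofReal_rpow_of_pos (by positivity),
    ← ENNReal.ofReal_mul hc.le, ← ENNReal.ofReal_mul hC₀.le,
    ENNReal.ofReal_le_ofReal_iff (by positivity), one_div, ← ENNReal.toReal_inv,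
    one_div, ← ENNReal.toReal_inv] at key
  have := Real.log_le_log (by positivity) key
  rwa [Real.log_mul hc.ne' (by positivity), Real.log_mul hC₀.ne' (by positivity),
    Real.log_rpow (by positivity), Real.log_rpow (by positivity), Real.log_div hB0.ne' hK.ne',
    Real.log_div hE0.ne' (by positivity), Real.log_pow] at this

lemma log_card_cone_le (d : ℕ) (hd : 3 ≤ d) :
    Real.log #(cone F d hd) ≤ Real.log 2 + (d - 1) * Real.log (Fintype.card F) := by
  have hK : (0 : ℝ) < #(cone F d hd) := by exact_mod_cast card_cone_pos d hd
  have hle : (#(cone F d hd) : ℝ) ≤ 2 * (Fintype.card F : ℝ) ^ (d - 1) := by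
    exact_mod_cast card_cone_le d hd
  calc Real.log #(cone F d hd) ≤ Real.log (2 * (Fintype.card F : ℝ) ^ (d - 1)) :=
        Real.log_le_log hK hle
    _ = Real.log 2 + (d - 1) * Real.log (Fintype.card F) := by
        rw [Real.log_mul two_ne_zero (by positivity), Real.log_pow, Nat.cast_pred (by omega)]

variable (F) in
def AvgBoundedBy (d : ℕ) (hd : 3 ≤ d) (p r : ℝ≥0∞) (C₀ : ℝ) : Prop :=
  ∀ f : (Fin d → F) → ℂ,
    eLpNorm (avg F d hd f) r (coneMeasure F d hd) ≤
      ENNReal.ofReal C₀ * eLpNorm f p (dxMeasure F d)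

section Tests

variable {d : ℕ} {hd : 3 ≤ d} {p r : ℝ≥0∞} {C₀ : ℝ}

lemma log_bound_of_test_delta (hp : p ≠ 0) (hr : r ≠ 0) (hC₀ : 0 < C₀)
    (hop : AvgBoundedBy F d hd p r C₀) :
    (d * p⁻¹.toReal - (d - 1)) * Real.log (Fintype.card F) ≤ Real.log C₀ + Real.log 2 := by
  have hK : (0 : ℝ) < #(cone F d hd) := by exact_mod_cast card_cone_pos d hd
  have hav (z) (hz : z ∈ cone F d hd) :
      1 / (#(cone F d hd) : ℝ) ≤ ‖avg F d hd (ind {0}) z‖ := by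
    rw [norm_avg_ind, filter_congr (q := (· = z)) fun x _ => by simp [sub_eq_zero, eq_comm],
      filter_eq' _ _, if_pos hz, card_singleton, Nat.cast_one]
  have := log_le_of_le_norm_avg_ind hp hr hC₀ (by positivity) (singleton_nonempty 0)
    ⟨0, zero_mem_cone d hd⟩ subset_rfl hav (hop _)
  simp only [one_div, Real.log_inv, sub_self, mul_zero, add_zero, card_singleton, Nat.cast_one,
    Real.log_one, zero_sub] at this
  linarith [log_card_cone_le (F := F) d hd]

lemma log_bound_of_test_cone (hp : p ≠ 0) (hr : r ≠ 0) (hC₀ : 0 < C₀)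
    (hop : AvgBoundedBy F d hd p r C₀) :
    (p⁻¹.toReal - (d - 1) * r⁻¹.toReal) * Real.log (Fintype.card F) ≤
      Real.log C₀ + (p⁻¹.toReal + r⁻¹.toReal) * Real.log 2 := by
  have hK : (0 : ℝ) < #(cone F d hd) := by exact_mod_cast card_cone_pos d hd
  have hav (z) (hz : z ∈ ({0} : Finset (Fin d → F))) :
      1 ≤ ‖avg F d hd (ind (cone F d hd)) z‖ := by
    rw [mem_singleton.mp hz, norm_avg_ind,
      filter_true_of_mem fun x hx => by simpa using neg_mem_cone hx, div_self hK.ne']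
  have := log_le_of_le_norm_avg_ind hp hr hC₀ one_pos ⟨0, zero_mem_cone d hd⟩
    (singleton_nonempty 0) (singleton_subset_iff.mpr (zero_mem_cone d hd)) hav (hop _)
  simp only [Real.log_one, card_singleton, Nat.cast_one, zero_add, zero_sub] at this
  have hcard := mul_le_mul_of_nonneg_left (log_card_cone_le (F := F) d hd)
    (add_nonneg (ENNReal.toReal_nonneg (a := p⁻¹)) (ENNReal.toReal_nonneg (a := r⁻¹)))
  linarith

lemma log_bound_of_test_subspace (hp : p ≠ 0) (hr : r ≠ 0) (hC₀ : 0 < C₀)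
    (hop : AvgBoundedBy F d hd p r C₀) (H : Submodule F (Fin d → F))
    (hHC : (H : Set (Fin d → F)) ⊆ cone F d hd) :
    ((1 + r⁻¹.toReal) * (Module.finrank F H + 1 - d) +
        p⁻¹.toReal * (d - Module.finrank F H)) * Real.log (Fintype.card F) ≤
      Real.log C₀ + (1 + r⁻¹.toReal) * Real.log 2 := by
  classical
  set Hf : Finset (Fin d → F) := {x | x ∈ H}
  have hHf : (#Hf : ℝ) = (Fintype.card F : ℝ) ^ Module.finrank F H := by
    rw [← Fintype.card_subtype, Module.card_eq_pow_finrank (K := F) (V := H)]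
    push_cast; rfl
  have hHfC : Hf ⊆ cone F d hd := fun x hx => hHC (mem_filter.mp hx).2
  have hK : (0 : ℝ) < #(cone F d hd) := by exact_mod_cast card_cone_pos d hd
  have hav (z) (hz : z ∈ Hf) : (#Hf : ℝ) / #(cone F d hd) ≤ ‖avg F d hd (ind Hf) z‖ := by
    rw [norm_avg_ind]
    gcongr
    intro x hx
    simp only [Hf, mem_filter, mem_univ, true_and] at hz hx ⊢
    exact ⟨hHfC (by simpa [Hf] using hx), H.sub_mem hz hx⟩
  have hHf0 : Hf.Nonempty := ⟨0, by simp [Hf]⟩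
  have := log_le_of_le_norm_avg_ind hp hr hC₀ (by have := hHf0.card_pos; positivity) hHf0 hHf0
    hHfC hav (hop _)
  rw [Real.log_div (by positivity) hK.ne', hHf, Real.log_pow] at this
  have hcard := mul_le_mul_of_nonneg_left (log_card_cone_le (F := F) d hd)
    (by positivity : (0 : ℝ) ≤ 1 + r⁻¹.toReal)
  linarith

end Tests

lemma mem_convexHull_of_le {d : ℕ} (hd : 4 ≤ d) {x y : ℝ} (hx : 0 ≤ x) (hy : y ≤ 1)
    (h₁ : d * x ≤ d - 1) (h₂ : x ≤ (d - 1) * y) (h₃ : d * x ≤ (d - 2) * (1 + y)) :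
    (x, y) ∈ convexHull ℝ
      ({((0 : ℝ), (0 : ℝ)), ((0 : ℝ), (1 : ℝ)), (((d : ℝ) - 1) / d, (1 : ℝ)),
        (((d : ℝ) - 1) / d, 1 / ((d : ℝ) - 2)),
        (((d : ℝ) ^ 2 - 3 * d + 2) / ((d : ℝ) ^ 2 - 2 * d + 2),
          ((d : ℝ) - 2) / ((d : ℝ) ^ 2 - 2 * d + 2))} : Set (ℝ × ℝ)) := by
  have hd4 : (4 : ℝ) ≤ d := by exact_mod_cast hd
  have hd1 : (0 : ℝ) < d - 1 := by linarith
  have hd2 : (0 : ℝ) < d - 2 := by linarith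
  have hd3 : (0 : ℝ) < d - 3 := by linarith
  have hD : (0 : ℝ) < d ^ 2 - 2 * d + 2 := by nlinarith
  rcases le_or_gt (d * x) ((d - 1) * y) with hc₁ | hc₁
  · refine mem_convexHull_of_eq_smul_add_smul (v := (0, 1)) (w := ((d - 1) / d, 1))
      (Set.mem_insert _ _) (by simp) (by simp) (b := y - d * x / (d - 1)) (c := d * x / (d - 1))
      (by rw [sub_nonneg, div_le_iff₀ hd1]; linarith) (by positivity) (by linarith) ?_
    ext <;> simp only [Prod.smul_mk, Prod.fst_add, Prod.snd_add, smul_eq_mul] <;>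
      field_simp <;> ring
  rcases le_or_gt (d * x) ((d - 1) * (d - 2) * y) with hc₂ | hc₂
  · refine mem_convexHull_of_eq_smul_add_smul (v := ((d - 1) / d, 1))
      (w := ((d - 1) / d, 1 / (d - 2))) (Set.mem_insert _ _) (by simp) (by simp)
      (b := ((d - 2) * y - d * x / (d - 1)) / (d - 3))
      (c := (d * x / (d - 1) - y) * (d - 2) / (d - 3))
      (div_nonneg (by rw [sub_nonneg, div_le_iff₀ hd1]; linarith) hd3.le)
      (div_nonneg (mul_nonneg (by rw [sub_nonneg, le_div_iff₀ hd1]; linarith) hd2.le) hd3.le)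
      (by rw [show _ + _ = d * x / (d - 1) by field_simp; ring, div_le_one hd1]; linarith) ?_
    ext <;> simp only [Prod.smul_mk, Prod.fst_add, Prod.snd_add, smul_eq_mul] <;>
      field_simp <;> ring
  · refine mem_convexHull_of_eq_smul_add_smul (v := ((d - 1) / d, 1 / (d - 2)))
      (w := ((d ^ 2 - 3 * d + 2) / (d ^ 2 - 2 * d + 2), (d - 2) / (d ^ 2 - 2 * d + 2)))
      (Set.mem_insert _ _) (by simp) (by simp)
      (b := d * (d - 2) * ((d - 1) * y - x) / (2 * (d - 1)))
      (c := (d ^ 2 - 2 * d + 2) * (d * x - (d - 1) * (d - 2) * y) / (2 * (d - 1) * (d - 2)))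
      (div_nonneg (mul_nonneg (by positivity) (by linarith)) (by linarith))
      (div_nonneg (mul_nonneg hD.le (by linarith)) (by positivity))
      (by rw [show _ + _ = (d * x - (d - 2) * y) / (d - 2) by field_simp; ring, div_le_one hd2]
          linarith) ?_
    ext <;> simp only [Prod.smul_mk, Prod.fst_add, Prod.snd_add, smul_eq_mul] <;>
      field_simp <;> ring

/-- necessary conditions for the boundedness of the restricted averaging
operator when the cone contains a `d/2`-dimensional subspace (even `d ≥ 4`). -/
theorem statement3 (d : ℕ) (hd : 4 ≤ d) (hde : Even d) (p r : ℝ≥0∞) (hp : 1 ≤ p) (hr : 1 ≤ r)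
    (C₀ : ℝ) (hC₀ : 0 < C₀)
    (h : ∃ N : ℕ, ∀ (F : Type) [Field F] [Fintype F] [DecidableEq F],
      ringChar F ≠ 2 → N ≤ Fintype.card F →
        (∃ H : Submodule F (Fin d → F), Module.finrank F H = d / 2 ∧
          (H : Set (Fin d → F)) ⊆ ↑(cone F d (by omega))) ∧
        (∀ f : (Fin d → F) → ℂ,
          eLpNorm (avg F d (by omega) f) r (coneMeasure F d (by omega)) ≤
            ENNReal.ofReal C₀ * eLpNorm f p (dxMeasure F d))) :
    (p⁻¹.toReal, r⁻¹.toReal) ∈ convexHull ℝ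
      ({((0 : ℝ), (0 : ℝ)), ((0 : ℝ), (1 : ℝ)), (((d : ℝ) - 1) / d, (1 : ℝ)),
        (((d : ℝ) - 1) / d, 1 / ((d : ℝ) - 2)),
        (((d : ℝ) ^ 2 - 3 * d + 2) / ((d : ℝ) ^ 2 - 2 * d + 2),
          ((d : ℝ) - 2) / ((d : ℝ) ^ 2 - 2 * d + 2))} : Set (ℝ × ℝ)) := by
  obtain ⟨N, hN⟩ := h
  set x := p⁻¹.toReal
  set y := r⁻¹.toReal
  have hp0 : p ≠ 0 := (zero_lt_one.trans_le hp).ne'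
  have hr0 : r ≠ 0 := (zero_lt_one.trans_le hr).ne'
  have hbounds : ∃ᶠ q : ℕ in atTop,
      (d * x - (d - 1)) * Real.log q ≤ Real.log C₀ + Real.log 2 ∧
      (x - (d - 1) * y) * Real.log q ≤ Real.log C₀ + (x + y) * Real.log 2 ∧
      ((1 + y) * ((d / 2 : ℕ) + 1 - d) + x * (d - (d / 2 : ℕ))) * Real.log q ≤
        Real.log C₀ + (1 + y) * Real.log 2 := by
    refine ((Nat.frequently_atTop_iff_infinite.mpr Nat.infinite_setOfPred_prime).and_eventually
      (eventually_ge_atTop (max N 3))).mono fun q ⟨hq, hqN⟩ => ?_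
    have : Fact q.Prime := ⟨hq⟩
    obtain ⟨⟨H, hH, hHC⟩, hop⟩ :=
      hN (ZMod q) (by rw [ZMod.ringChar_zmod_n]; omega) (by rw [ZMod.card]; omega)
    have h₁ := log_bound_of_test_delta hp0 hr0 hC₀ hop
    have h₂ := log_bound_of_test_cone hp0 hr0 hC₀ hop
    have h₃ := log_bound_of_test_subspace hp0 hr0 hC₀ hop H hHC
    rw [ZMod.card] at h₁ h₂ h₃
    rw [hH] at h₃
    exact ⟨h₁, h₂, h₃⟩
  have h₁ := nonpos_of_frequently_mul_log_le (hbounds.mono fun _ h => h.1)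
  have h₂ := nonpos_of_frequently_mul_log_le (hbounds.mono fun _ h => h.2.1)
  have h₃ := nonpos_of_frequently_mul_log_le (hbounds.mono fun _ h => h.2.2)
  have hd2 : (d : ℝ) = 2 * (d / 2 : ℕ) := by
    exact_mod_cast (Nat.two_mul_div_two_of_even hde).symm
  have hy : y ≤ 1 := by simpa [y] using ENNReal.toReal_mono (by simp) (ENNReal.inv_le_one.mpr hr)
  exact mem_convexHull_of_le hd ENNReal.toReal_nonneg hy (by linarith) (by linarith)
    (by linear_combination 2 * h₃ + (1 + y - x) * hd2)

end ConeFF
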